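/- arXiv:1111.3162 — 6 statements merged into one kernel-verified Lean document; each statement's English description precedes it below -/
import Mathlib

section
/- Let N^d(μ, σ²) be the discretized normal distribution with mass P(z − 1/2 ≤ Z_{μ,σ²} < z + 1/2) at z ∈ ℤ, and let Ñ^d(μ, σ²) be the alternative discretization with mass P(z ≤ Z_{μ,σ²} < z + 1) at z ∈ ℤ, where Z_{μ,σ²} ~ N(μ, σ²). Then d_TV(N^d(μ, σ²), Ñ^d(μ, σ²)) = d_TV(N^d(μ, σ²), N^d(μ − 1/2, σ²)) ≤ d_TV(N(μ, σ²), N(μ − 1/2, σ²)) ≤ c/σ for an absolute constant c > 0. -/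
/-!
Shifting by `1/2` turns the alternative discretization into the standard one with mean
`m - 1/2`, and the standard discretization of `N(m, σ²)` is the image of `N(m, σ²)` under
rounding, so the data processing inequality compares it with the continuous distributions.
Two Gaussians with the same variance and means `δ` apart have densities crossing at the
midpoint of the means; the total variation distance is the mass of an interval of length `δ`,
hence at most `δ` times the maximal density `1 / √(2πσ²)`.
-/

open MeasureTheory ProbabilityTheory Real
open scoped NNReal ENNReal

noncomputable def tvDist {α : Type*} [MeasurableSpace α] (μ ν : Measure α) : ℝ :=
  ⨆ A : {A : Set α // MeasurableSet A}, |(μ A).toReal - (ν A).toReal|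

noncomputable def discretizedNormal (m : ℝ) (v : ℝ≥0) : Measure ℝ :=
  Measure.sum fun z : ℤ =>
    (gaussianReal m v (Set.Ico ((z : ℝ) - 1/2) ((z : ℝ) + 1/2))) • Measure.dirac (z : ℝ)

/-- The alternative discretization `Ñ^d(m, v)`, with mass `P(z ≤ Z < z + 1)` at `z ∈ ℤ`. -/
noncomputable def discretizedNormalAlt (m : ℝ) (v : ℝ≥0) : Measure ℝ :=
  Measure.sum fun z : ℤ =>
    (gaussianReal m v (Set.Ico (z : ℝ) ((z : ℝ) + 1))) • Measure.dirac (z : ℝ)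

open Set

section TotalVariation

variable {α β : Type*} [MeasurableSpace α] [MeasurableSpace β] {μ ν : Measure α}

lemma tvDist_le {C : ℝ} (h : ∀ A, MeasurableSet A → |μ.real A - ν.real A| ≤ C) :
    tvDist μ ν ≤ C :=
  have : Nonempty {A : Set α // MeasurableSet A} := ⟨⟨∅, .empty⟩⟩
  ciSup_le fun A => h A.1 A.2

lemma abs_measureReal_sub_le_tvDist [IsFiniteMeasure μ] [IsFiniteMeasure ν] {A : Set α}
    (hA : MeasurableSet A) : |μ.real A - ν.real A| ≤ tvDist μ ν := by
  refine le_ciSup (f := fun A : {A : Set α // MeasurableSet A} => |μ.real A - ν.real A|)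
    ⟨μ.real univ + ν.real univ, ?_⟩ ⟨A, hA⟩
  rintro _ ⟨B, rfl⟩
  have hμB : μ.real B ≤ μ.real univ := measureReal_mono (subset_univ _)
  have hνB : ν.real B ≤ ν.real univ := measureReal_mono (subset_univ _)
  have : 0 ≤ μ.real B := measureReal_nonneg
  have : 0 ≤ ν.real B := measureReal_nonneg
  exact abs_le.2 ⟨by linarith, by linarith⟩

lemma tvDist_map_le [IsFiniteMeasure μ] [IsFiniteMeasure ν] {f : α → β} (hf : Measurable f) :
    tvDist (μ.map f) (ν.map f) ≤ tvDist μ ν :=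
  tvDist_le fun A hA => by
    rw [map_measureReal_apply hf hA, map_measureReal_apply hf hA]
    exact abs_measureReal_sub_le_tvDist (hf hA)

lemma measureReal_sub_le_of_restrict_le [IsFiniteMeasure μ] [IsFiniteMeasure ν] {S A : Set α}
    (hS : MeasurableSet S) (hA : MeasurableSet A) (hνμ : ν.restrict S ≤ μ.restrict S)
    (hμν : μ.restrict Sᶜ ≤ ν.restrict Sᶜ) :
    μ.real A - ν.real A ≤ μ.real S - ν.real S := by
  have h_in : ν.real (Aᶜ ∩ S) ≤ μ.real (Aᶜ ∩ S) := by
    simpa [Measure.real, Measure.restrict_apply hA.compl] using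
      ENNReal.toReal_mono (measure_ne_top _ _) (hνμ Aᶜ)
  have h_out : μ.real (A ∩ Sᶜ) ≤ ν.real (A ∩ Sᶜ) := by
    simpa [Measure.real, Measure.restrict_apply hA] using
      ENNReal.toReal_mono (measure_ne_top _ _) (hμν A)
  have hμA := measureReal_inter_add_sdiff (μ := μ) (s := A) hS
  have hνA := measureReal_inter_add_sdiff (μ := ν) (s := A) hS
  have hμS := measureReal_inter_add_sdiff (μ := μ) (s := S) hA
  have hνS := measureReal_inter_add_sdiff (μ := ν) (s := S) hA
  rw [inter_comm S, sdiff_eq, inter_comm S] at hμS hνS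
  rw [sdiff_eq] at hμA hνA
  linarith

lemma tvDist_le_of_restrict_le [IsProbabilityMeasure μ] [IsProbabilityMeasure ν] {S : Set α}
    (hS : MeasurableSet S) (hνμ : ν.restrict S ≤ μ.restrict S)
    (hμν : μ.restrict Sᶜ ≤ ν.restrict Sᶜ) :
    tvDist μ ν ≤ μ.real S - ν.real S := by
  refine tvDist_le fun A hA => abs_le.2 ⟨?_, measureReal_sub_le_of_restrict_le hS hA hνμ hμν⟩
  have := measureReal_sub_le_of_restrict_le hS hA.compl hνμ hμν
  rw [probReal_compl_eq_one_sub hA, probReal_compl_eq_one_sub hA] at this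
  linarith

end TotalVariation

section Rounding

variable {R : Type*} [Field R] [LinearOrder R] [IsStrictOrderedRing R] [FloorRing R]

lemma preimage_round_singleton (z : ℤ) :
    (round : R → ℤ) ⁻¹' {z} = Ico ((z : R) - 1/2) ((z : R) + 1/2) := by
  have : (round : R → ℤ) = Int.floor ∘ (· + 1/2) := funext round_eq
  rw [this, preimage_comp, Int.preimage_floor_singleton, preimage_add_const_Ico, add_sub_assoc]
  norm_num

lemma measurable_round [TopologicalSpace R] [OrderTopology R] [MeasurableSpace R]
    [OpensMeasurableSpace R] : Measurable (round : R → ℤ) :=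
  measurable_to_countable fun z => by
    rw [preimage_round_singleton]
    exact measurableSet_Ico

end Rounding

lemma map_round_eq_sum (μ : Measure ℝ) :
    μ.map (fun x => (round x : ℝ)) = Measure.sum fun z : ℤ =>
      μ (Ico ((z : ℝ) - 1/2) ((z : ℝ) + 1/2)) • Measure.dirac (z : ℝ) := by
  have hcast : Measurable (Int.cast : ℤ → ℝ) := measurable_from_top
  change μ.map ((Int.cast : ℤ → ℝ) ∘ round) = _
  rw [← Measure.map_map hcast measurable_round, Measure.map_eq_sum _ _ measurable_round,
    Measure.map_sum hcast.aemeasurable]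
  simp_rw [Measure.map_smul, Measure.map_dirac' hcast, preimage_round_singleton]

lemma gaussianReal_add_const_apply (m y : ℝ) (v : ℝ≥0) {s : Set ℝ} (hs : MeasurableSet s) :
    gaussianReal (m + y) v s = gaussianReal m v ((· + y) ⁻¹' s) := by
  rw [← gaussianReal_map_add_const, Measure.map_apply (measurable_add_const y) hs]

section Gaussian

variable {v : ℝ≥0}

lemma gaussianPDFReal_le_gaussianPDFReal {m m' x x' : ℝ} (h : (x - m) ^ 2 ≤ (x' - m') ^ 2) :
    gaussianPDFReal m' v x' ≤ gaussianPDFReal m v x := by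
  unfold gaussianPDFReal
  gcongr

lemma gaussianPDFReal_le (m x : ℝ) : gaussianPDFReal m v x ≤ (√(2 * π * v))⁻¹ := by
  simpa [gaussianPDFReal] using gaussianPDFReal_le_gaussianPDFReal (v := v) (m := m) (x := m)
    (x' := x) (m' := m) (by simpa using sq_nonneg (x - m))

lemma gaussianReal_Ioc_le (m : ℝ) (hv : v ≠ 0) (a b : ℝ) :
    gaussianReal m v (Ioc a b) ≤ ENNReal.ofReal ((b - a) / √(2 * π * v)) := by
  calc gaussianReal m v (Ioc a b) = ∫⁻ x in Ioc a b, gaussianPDF m v x :=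
        gaussianReal_apply m hv _
    _ ≤ ∫⁻ _ in Ioc a b, ENNReal.ofReal (√(2 * π * v))⁻¹ :=
        lintegral_mono fun x => ENNReal.ofReal_le_ofReal (gaussianPDFReal_le m x)
    _ = ENNReal.ofReal ((b - a) / √(2 * π * v)) := by
        rw [setLIntegral_const, Real.volume_Ioc, ← ENNReal.ofReal_mul (by positivity),
          div_eq_mul_inv, mul_comm]

lemma restrict_gaussianReal_le {m m' : ℝ} (hv : v ≠ 0) {S : Set ℝ} (hS : MeasurableSet S)
    (h : ∀ x ∈ S, (x - m) ^ 2 ≤ (x - m') ^ 2) :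
    (gaussianReal m' v).restrict S ≤ (gaussianReal m v).restrict S := by
  rw [gaussianReal_of_var_ne_zero _ hv, gaussianReal_of_var_ne_zero _ hv,
    restrict_withDensity hS, restrict_withDensity hS]
  exact withDensity_mono <| ae_restrict_of_forall_mem hS fun x hx =>
    ENNReal.ofReal_le_ofReal (gaussianPDFReal_le_gaussianPDFReal (h x hx))

theorem tvDist_gaussianReal_sub_const_le (m : ℝ) (hv : v ≠ 0) {δ : ℝ} (hδ : 0 ≤ δ) :
    tvDist (gaussianReal m v) (gaussianReal (m - δ) v) ≤ δ / √(2 * π * v) := by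
  set c := m - δ / 2 with hc
  have hS : MeasurableSet (Ioi c) := measurableSet_Ioi
  have h_right := restrict_gaussianReal_le (m := m) (m' := m - δ) hv hS fun x (hx : c < x) => by
    nlinarith [mul_nonneg hδ (sub_nonneg.2 hx.le), hc]
  have h_left := restrict_gaussianReal_le (m := m - δ) (m' := m) hv hS.compl fun x hx => by
    rw [compl_Ioi, mem_Iic] at hx
    nlinarith [mul_nonneg hδ (sub_nonneg.2 hx), hc]
  have h_shift : gaussianReal m v (Ioi c) = gaussianReal (m - δ) v (Ioc (c - δ) c ∪ Ioi c) := by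
    have h := gaussianReal_add_const_apply (m - δ) δ v hS
    rwa [sub_add_cancel, preimage_add_const_Ioi,
      ← Ioc_union_Ioi_eq_Ioi (a := c - δ) (b := c) (by linarith)] at h
  have h_Ioc : (gaussianReal (m - δ) v).real (Ioc (c - δ) c) ≤ δ / √(2 * π * v) := by
    refine ENNReal.toReal_le_of_le_ofReal (by positivity) ?_
    simpa using gaussianReal_Ioc_le (m - δ) hv (c - δ) c
  calc tvDist (gaussianReal m v) (gaussianReal (m - δ) v)
      ≤ (gaussianReal m v).real (Ioi c) - (gaussianReal (m - δ) v).real (Ioi c) :=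
        tvDist_le_of_restrict_le hS h_right h_left
    _ = (gaussianReal (m - δ) v).real (Ioc (c - δ) c) := by
        rw [measureReal_def, h_shift, ← measureReal_def,
          measureReal_union (Ioc_disjoint_Ioi le_rfl) hS, add_sub_cancel_right]
    _ ≤ δ / √(2 * π * v) := h_Ioc

end Gaussian

lemma discretizedNormal_eq_map_round (m : ℝ) (v : ℝ≥0) :
    discretizedNormal m v = (gaussianReal m v).map (fun x => (round x : ℝ)) :=
  (map_round_eq_sum _).symm

lemma discretizedNormalAlt_eq (m : ℝ) (v : ℝ≥0) :
    discretizedNormalAlt m v = discretizedNormal (m - 1/2) v := by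
  unfold discretizedNormalAlt discretizedNormal
  refine congrArg Measure.sum (funext fun z => congrArg (· • _) ?_)
  have h := gaussianReal_add_const_apply (m - 1/2) (1/2) v
    (measurableSet_Ico (a := (z : ℝ)) (b := z + 1))
  rw [sub_add_cancel, preimage_add_const_Ico, add_sub_assoc] at h
  norm_num [h]

/-- comparison of the two discretizations of the normal distribution. -/
theorem stmt1 :
    ∃ c > 0, ∀ (m σ : ℝ), 0 < σ →
      (tvDist (discretizedNormal m (σ ^ 2).toNNReal) (discretizedNormalAlt m (σ ^ 2).toNNReal)
        = tvDist (discretizedNormal m (σ ^ 2).toNNReal)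
            (discretizedNormal (m - 1/2) (σ ^ 2).toNNReal)) ∧
      tvDist (discretizedNormal m (σ ^ 2).toNNReal) (discretizedNormalAlt m (σ ^ 2).toNNReal)
        ≤ tvDist (gaussianReal m (σ ^ 2).toNNReal) (gaussianReal (m - 1/2) (σ ^ 2).toNNReal) ∧
      tvDist (gaussianReal m (σ ^ 2).toNNReal) (gaussianReal (m - 1/2) (σ ^ 2).toNNReal)
        ≤ c / σ := by
  refine ⟨1/2, by norm_num, fun m σ hσ => ?_⟩
  have hv : (σ ^ 2).toNNReal ≠ 0 := by simp [hσ.ne']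
  have hσ_le : σ ≤ √(2 * π * (σ ^ 2).toNNReal) := by
    rw [Real.coe_toNNReal _ (sq_nonneg σ), Real.le_sqrt hσ.le (by positivity)]
    nlinarith [Real.pi_gt_three]
  rw [discretizedNormalAlt_eq]
  refine ⟨rfl, ?_, ?_⟩
  · rw [discretizedNormal_eq_map_round, discretizedNormal_eq_map_round]
    exact tvDist_map_le (measurable_from_top.comp measurable_round)
  · calc _ ≤ 1/2 / √(2 * π * (σ ^ 2).toNNReal) :=
          tvDist_gaussianReal_sub_const_le m hv (by norm_num)
      _ ≤ 1/2 / σ := by gcongr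
end

section
/- Let V be an integer valued random variable and let (V, V') be an exchangeable pair defined on the same probability space with P(V − V' = 1) ≠ 0. Then d_TV(L(V), L(V+1)) ≤ [√(Var(E(I(V − V' = 1) | V))) + √(Var(E(I(V − V' = −1) | V)))] / P(V − V' = 1). -/
/-!
Let `c = P(V - V' = 1)`; by exchangeability also `c = P(V - V' = -1)`, and swapping `V` and `V'`
in the event `{V ∈ A, V - V' = 1}` gives `P(V ∈ A, V - V' = 1) = P(V + 1 ∈ A, V - V' = -1)`.
Hence `c (P(V ∈ A) - P(V + 1 ∈ A))` is the difference of `E[c - E[I(V - V' = 1) | V]; V ∈ A]`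
and `E[c - E[I(V - V' = -1) | V]; V + 1 ∈ A]`. Both conditional expectations have mean `c`, so
each term is at most `E|E[I | V] - c| ≤ √Var(E[I | V])`.
-/

open MeasureTheory ProbabilityTheory Real
open scoped NNReal ENNReal

lemma tvDist_le_of_forall_abs_sub_le {α : Type*} [MeasurableSpace α] {μ ν : Measure α}
    {C : ℝ} (hC : 0 ≤ C) (h : ∀ A, MeasurableSet A → |μ.real A - ν.real A| ≤ C) :
    tvDist μ ν ≤ C :=
  Real.iSup_le (fun A => h A.1 A.2) hC

section Variance

variable {Ω : Type*} {m m₀ : MeasurableSpace Ω} {P : Measure Ω} [IsProbabilityMeasure P]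

lemma integral_abs_sub_integral_le_sqrt_variance {X : Ω → ℝ} (hX : MemLp X 2 P) :
    ∫ ω, |X ω - P[X]| ∂P ≤ √(Var[X; P]) := by
  have hY : MemLp (fun ω => |X ω - P[X]|) 2 P := (hX.sub (memLp_const _)).abs
  have hsq : P[(fun ω => |X ω - P[X]|) ^ 2] = Var[X; P] := by
    rw [variance_eq_integral hX.aemeasurable]
    simp only [Pi.pow_apply, sq_abs]
  have h := variance_nonneg (fun ω => |X ω - P[X]|) P
  rw [variance_eq_sub hY, hsq] at h
  exact (Real.le_sqrt (integral_nonneg fun _ => abs_nonneg _) (variance_nonneg X P)).2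
    (by linarith)

lemma abs_integral_mul_measureReal_sub_setIntegral_le_sqrt_variance_condExp (hm : m ≤ m₀)
    {F : Ω → ℝ} (hF : MemLp F 2 P) {s : Set Ω} (hs : MeasurableSet[m] s) :
    |(∫ ω, F ω ∂P) * P.real s - ∫ ω in s, F ω ∂P| ≤ √(Var[P[F|m]; P]) := by
  set g := P[F|m]
  have hg : Integrable g P := integrable_condExp
  have hdiff :
      (∫ ω, F ω ∂P) * P.real s - ∫ ω in s, F ω ∂P = ∫ ω in s, (P[g] - g ω) ∂P := by
    rw [integral_sub (integrable_const _) hg.integrableOn, setIntegral_const,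
      setIntegral_condExp hm (hF.integrable one_le_two) hs, integral_condExp hm, smul_eq_mul,
      mul_comm]
  calc |(∫ ω, F ω ∂P) * P.real s - ∫ ω in s, F ω ∂P|
      ≤ ∫ ω in s, |P[g] - g ω| ∂P := hdiff ▸ abs_integral_le_integral_abs
    _ ≤ ∫ ω, |g ω - P[g]| ∂P := by
        simp_rw [abs_sub_comm (P[g])]
        exact setIntegral_le_integral (hg.sub (integrable_const _)).abs
          (ae_of_all _ fun _ => abs_nonneg _)
    _ ≤ √(Var[g; P]) := integral_abs_sub_integral_le_sqrt_variance (hF.condExp one_le_two)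

lemma abs_measureReal_mul_sub_measureReal_inter_le_sqrt_variance_condExp (hm : m ≤ m₀)
    {D s : Set Ω} (hD : MeasurableSet D) (hs : MeasurableSet[m] s) :
    |P.real D * P.real s - P.real (D ∩ s)| ≤ √(Var[P[D.indicator 1|m]; P]) := by
  have h := abs_integral_mul_measureReal_sub_setIntegral_le_sqrt_variance_condExp (P := P)
    (F := D.indicator 1) hm ((memLp_const 1).indicator hD) hs
  rwa [integral_indicator_one hD, integral_indicator_one hD, measureReal_restrict_apply hD] at h

end Variance

section ExchangeablePair

variable {Ω : Type*} [MeasurableSpace Ω] {P : Measure Ω}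

lemma measure_preimage_eq_of_map_prod_eq_map_swap {α : Type*} [MeasurableSpace α]
    {V V' : Ω → α} (hV : Measurable V) (hV' : Measurable V')
    (hexch : P.map (fun ω => (V ω, V' ω)) = P.map (fun ω => (V' ω, V ω)))
    {S : Set (α × α)} (hS : MeasurableSet S) :
    P ((fun ω => (V ω, V' ω)) ⁻¹' S) = P ((fun ω => (V' ω, V ω)) ⁻¹' S) := by
  rw [← Measure.map_apply (hV.prodMk hV') hS, hexch, Measure.map_apply (hV'.prodMk hV) hS]

lemma measure_sub_eq_one_inter_eq_measure_sub_eq_neg_one_inter {V V' : Ω → ℤ}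
    (hV : Measurable V) (hV' : Measurable V')
    (hexch : P.map (fun ω => (V ω, V' ω)) = P.map (fun ω => (V' ω, V ω))) (A : Set ℤ) :
    P ({ω | V ω - V' ω = 1} ∩ V ⁻¹' A) =
      P ({ω | V ω - V' ω = -1} ∩ (fun ω => V ω + 1) ⁻¹' A) := by
  have h := measure_preimage_eq_of_map_prod_eq_map_swap hV hV' hexch
    (S := {p | p.1 - p.2 = 1 ∧ p.1 ∈ A}) (Set.to_countable _).measurableSet
  refine h.trans (congrArg P ?_)
  ext ω
  simp only [Set.mem_inter_iff, Set.mem_ofPred_eq, Set.mem_preimage]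
  constructor
  · rintro ⟨hjump, hA⟩
    exact ⟨by omega, by rwa [show V' ω = V ω + 1 by omega] at hA⟩
  · rintro ⟨hjump, hA⟩
    exact ⟨by omega, by rwa [show V ω + 1 = V' ω by omega] at hA⟩

end ExchangeablePair

/-- Lemma of Röllin and Ross: bounding `d_TV(L(V), L(V+1))` via an
exchangeable pair. -/
theorem stmt2 {Ω : Type} [MeasurableSpace Ω] (P : Measure Ω) [IsProbabilityMeasure P]
    (V V' : Ω → ℤ) (hV : Measurable V) (hV' : Measurable V')
    (hexch : P.map (fun ω => (V ω, V' ω)) = P.map (fun ω => (V' ω, V ω)))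
    (hP : P {ω | V ω - V' ω = 1} ≠ 0) :
    tvDist (P.map V) (P.map (fun ω => V ω + 1)) ≤
      (Real.sqrt (variance (P[(fun ω => if V ω - V' ω = 1 then (1 : ℝ) else 0) |
          MeasurableSpace.comap V inferInstance]) P)
        + Real.sqrt (variance (P[(fun ω => if V ω - V' ω = -1 then (1 : ℝ) else 0) |
          MeasurableSpace.comap V inferInstance]) P))
      / (P {ω | V ω - V' ω = 1}).toReal := by
  have hind (k : ℤ) : (fun ω => if V ω - V' ω = k then (1 : ℝ) else 0) =
      {ω | V ω - V' ω = k}.indicator 1 := by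
    ext ω; simp [Set.indicator_apply]
  rw [hind, hind, ← measureReal_def]
  set up : Set Ω := {ω | V ω - V' ω = 1}
  set down : Set Ω := {ω | V ω - V' ω = -1}
  have hjump (A : Set ℤ) :
      P.real (up ∩ V ⁻¹' A) = P.real (down ∩ (fun ω => V ω + 1) ⁻¹' A) :=
    congrArg ENNReal.toReal
      (measure_sub_eq_one_inter_eq_measure_sub_eq_neg_one_inter hV hV' hexch A)
  have hdown : P.real down = P.real up := by simpa using (hjump Set.univ).symm
  have hup_meas : MeasurableSet up := (hV.sub hV') (measurableSet_singleton 1)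
  have hdown_meas : MeasurableSet down := (hV.sub hV') (measurableSet_singleton (-1))
  have hc : 0 < P.real up := ENNReal.toReal_pos hP (measure_ne_top P _)
  refine tvDist_le_of_forall_abs_sub_le (by positivity) fun A hA => ?_
  have h_up := abs_measureReal_mul_sub_measureReal_inter_le_sqrt_variance_condExp (P := P)
    hV.comap_le hup_meas (comap_measurable V hA)
  have h_down := abs_measureReal_mul_sub_measureReal_inter_le_sqrt_variance_condExp (P := P)
    hV.comap_le hdown_meas ((comap_measurable V).add_const 1 hA)
  rw [hdown, ← hjump] at h_down
  rw [le_div_iff₀ hc, map_measureReal_apply hV hA, map_measureReal_apply (hV.add_const 1) hA]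
  calc |P.real (V ⁻¹' A) - P.real ((fun ω => V ω + 1) ⁻¹' A)| * P.real up
      = |(P.real up * P.real (V ⁻¹' A) - P.real (up ∩ V ⁻¹' A))
          - (P.real up * P.real ((fun ω => V ω + 1) ⁻¹' A) - P.real (up ∩ V ⁻¹' A))| := by
        rw [sub_sub_sub_cancel_right, ← mul_sub, abs_mul, abs_of_pos hc, mul_comm]
    _ ≤ _ := (abs_sub _ _).trans (add_le_add h_up h_down)
end

section
/- Let (S, S') be an exchangeable pair of integer valued random variables with |S' − S| ≤ 1 almost surely, and let λ > 0 be a constant. Let G = (S' − S)/(2λ) and D = S' − S. Then for every function h: ℝ → {0,1} that is constant on each interval [z − 1/2, z + 1/2) for z ∈ ℤ, one has E[ G · ∫₀^D (h(S + t) − h(S)) dt ] = 0. -/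
/-!
Since `h` is constant on `[z - 1/2, z + 1/2)`, for `|d| ≤ 1` the integral
`∫₀^d (h(s + t) - h(s)) dt` picks up `h(s + d) - h(s)` on half of the interval only, so it equals
`(d / 2) (h(s + d) - h(s))`. Hence the integrand is `φ(S, S')` with
`φ(a, b) = (b - a)² (h b - h a) / (4λ)` antisymmetric, and exchangeability gives
`E φ(S, S') = E φ(S', S) = -E φ(S, S')`.
-/

open MeasureTheory Set

section StepFunction

variable {E : Type*} [NormedAddCommGroup E] {f : ℝ → E} {a m b : ℝ} {c c₁ c₂ : E}

theorem intervalIntegrable_of_eqOn_Ioo (hab : a ≤ b) (hf : EqOn f (fun _ => c) (Ioo a b)) :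
    IntervalIntegrable f volume a b :=
  (intervalIntegrable_iff_integrableOn_Ioo_of_le hab).2 <|
    (integrableOn_const measure_Ioo_lt_top.ne).congr_fun hf.symm measurableSet_Ioo

variable [NormedSpace ℝ E] [CompleteSpace E]

theorem intervalIntegral_eq_of_eqOn_Ioo (hab : a ≤ b) (hf : EqOn f (fun _ => c) (Ioo a b)) :
    ∫ x in a..b, f x = (b - a) • c := by
  rw [intervalIntegral.integral_of_le hab, integral_Ioc_eq_integral_Ioo,
    setIntegral_congr_fun measurableSet_Ioo hf, setIntegral_const, Measure.real,
    Real.volume_Ioo, ENNReal.toReal_ofReal (sub_nonneg.2 hab)]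

theorem intervalIntegral_eq_of_eqOn_Ioo_Ioo (ham : a ≤ m) (hmb : m ≤ b)
    (hf₁ : EqOn f (fun _ => c₁) (Ioo a m)) (hf₂ : EqOn f (fun _ => c₂) (Ioo m b)) :
    ∫ x in a..b, f x = (m - a) • c₁ + (b - m) • c₂ := by
  rw [← intervalIntegral.integral_add_adjacent_intervals
      (intervalIntegrable_of_eqOn_Ioo ham hf₁) (intervalIntegrable_of_eqOn_Ioo hmb hf₂),
    intervalIntegral_eq_of_eqOn_Ioo ham hf₁, intervalIntegral_eq_of_eqOn_Ioo hmb hf₂]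

end StepFunction

theorem integral_sub_eq_of_const_on_Ico {h : ℝ → ℝ}
    (hconst : ∀ (z : ℤ) (x : ℝ), (z : ℝ) - 1/2 ≤ x → x < (z : ℝ) + 1/2 → h x = h z)
    (s d : ℤ) (hd : |d| ≤ 1) :
    ∫ t in (0 : ℝ)..(d : ℝ), (h (s + t) - h s) = d / 2 * (h (s + d : ℤ) - h s) := by
  have shift : ∀ z : ℤ, EqOn (fun t : ℝ => h (s + t) - h s) (fun _ => h (s + z : ℤ) - h s)
      (Ioo (z - 1/2) (z + 1/2)) := fun z t ht => by
    simp only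
    rw [hconst (s + z) (s + t) (by push_cast; linarith [ht.1]) (by push_cast; linarith [ht.2])]
  obtain ⟨hd₁, hd₂⟩ := abs_le.mp hd
  interval_cases d
  · rw [intervalIntegral.integral_symm, intervalIntegral_eq_of_eqOn_Ioo_Ioo (m := -1/2)
      (by norm_num) (by norm_num) ((shift (-1)).mono (Ioo_subset_Ioo (by norm_num) (by norm_num)))
      ((shift 0).mono (Ioo_subset_Ioo (by norm_num) (by norm_num)))]
    push_cast [smul_eq_mul, add_zero]
    ring
  · simp
  · rw [intervalIntegral_eq_of_eqOn_Ioo_Ioo (m := 1/2)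
      (by norm_num) (by norm_num) ((shift 0).mono (Ioo_subset_Ioo (by norm_num) (by norm_num)))
      ((shift 1).mono (Ioo_subset_Ioo (by norm_num) (by norm_num)))]
    push_cast [smul_eq_mul, add_zero]
    ring

theorem integral_eq_zero_of_exchangeable_of_antisymm {Ω α E : Type*} [MeasurableSpace Ω]
    [MeasurableSpace α] [NormedAddCommGroup E] [NormedSpace ℝ E] {P : Measure Ω} {X Y : Ω → α}
    (hX : Measurable X) (hY : Measurable Y)
    (hexch : P.map (fun ω => (X ω, Y ω)) = P.map (fun ω => (Y ω, X ω)))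
    {φ : α × α → E} (hφ : StronglyMeasurable φ) (hanti : ∀ a b, φ (b, a) = -φ (a, b)) :
    ∫ ω, φ (X ω, Y ω) ∂P = 0 := by
  have hswap : ∫ ω, φ (X ω, Y ω) ∂P = ∫ ω, φ (Y ω, X ω) ∂P := by
    rw [← integral_map (hX.prodMk hY).aemeasurable hφ.aestronglyMeasurable, hexch,
      integral_map (hY.prodMk hX).aemeasurable hφ.aestronglyMeasurable]
  rw [show (fun ω => φ (Y ω, X ω)) = fun ω => -φ (X ω, Y ω) from funext fun ω => hanti _ _,
    integral_neg] at hswap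
  have twice_eq_zero : (2 : ℝ) • ∫ ω, φ (X ω, Y ω) ∂P = 0 := by
    rw [two_smul]
    nth_rewrite 1 [hswap]
    exact neg_add_cancel _
  exact (smul_eq_zero.1 twice_eq_zero).resolve_left two_ne_zero

theorem stmt11_general {Ω : Type} [MeasurableSpace Ω] (P : Measure Ω)
    (S S' : Ω → ℤ) (hS : Measurable S) (hS' : Measurable S')
    (hexch : P.map (fun ω => (S ω, S' ω)) = P.map (fun ω => (S' ω, S ω)))
    (hbd : ∀ᵐ ω ∂P, |S' ω - S ω| ≤ 1)
    (lam : ℝ)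
    (G : Ω → ℝ) (hG : G = fun ω => ((S' ω : ℝ) - (S ω : ℝ)) / (2 * lam))
    (D : Ω → ℤ) (hD : D = fun ω => S' ω - S ω)
    (h : ℝ → ℝ)
    (hconst : ∀ (z : ℤ) (x : ℝ), (z : ℝ) - 1/2 ≤ x → x < (z : ℝ) + 1/2 → h x = h z) :
    ∫ ω, G ω * (∫ t in (0 : ℝ)..((D ω : ℝ)), (h ((S ω : ℝ) + t) - h ((S ω : ℝ)))) ∂P
      = 0 := by
  subst hG hD
  set φ : ℤ × ℤ → ℝ := fun p =>
    ((p.2 : ℝ) - p.1) / (2 * lam) * (((p.2 : ℝ) - p.1) / 2 * (h p.2 - h p.1))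
  have integrand_eq : ∀ᵐ ω ∂P, ((S' ω : ℝ) - S ω) / (2 * lam) *
      (∫ t in (0 : ℝ)..((S' ω - S ω : ℤ) : ℝ), (h (S ω + t) - h (S ω))) = φ (S ω, S' ω) := by
    filter_upwards [hbd] with ω hω
    rw [integral_sub_eq_of_const_on_Ico hconst (S ω) _ hω]
    simp [φ]
  rw [integral_congr_ae integrand_eq]
  exact integral_eq_zero_of_exchangeable_of_antisymm hS hS' hexch
    StronglyMeasurable.of_discrete fun a b => by simp only [φ]; ring

/-- equation (6-c2-2): for an exchangeable pair of integer valued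
random variables with `|S' - S| ≤ 1`, the term `E[G ∫₀^D (h(S+t) - h(S)) dt]` vanishes
for every `{0,1}`-valued `h` that is constant on the intervals `[z - 1/2, z + 1/2)`. -/
theorem stmt11 {Ω : Type} [MeasurableSpace Ω] (P : Measure Ω) [IsProbabilityMeasure P]
    (S S' : Ω → ℤ) (hS : Measurable S) (hS' : Measurable S')
    (hexch : P.map (fun ω => (S ω, S' ω)) = P.map (fun ω => (S' ω, S ω)))
    (hbd : ∀ᵐ ω ∂P, |S' ω - S ω| ≤ 1)
    (lam : ℝ) (hlam : 0 < lam)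
    (G : Ω → ℝ) (hG : G = fun ω => ((S' ω : ℝ) - (S ω : ℝ)) / (2 * lam))
    (D : Ω → ℤ) (hD : D = fun ω => S' ω - S ω)
    (h : ℝ → ℝ) (hval : ∀ x, h x = 0 ∨ h x = 1)
    (hconst : ∀ (z : ℤ) (x : ℝ), (z : ℝ) - 1/2 ≤ x → x < (z : ℝ) + 1/2 → h x = h z) :
    ∫ ω, G ω * (∫ t in (0 : ℝ)..((D ω : ℝ)), (h ((S ω : ℝ) + t) - h ((S ω : ℝ)))) ∂P
      = 0 :=
  stmt11_general P S S' hS hS' hexch hbd lam G hG D hD h hconst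
end

section
/- Let X be an integer valued random variable. Then there exists an exchangeable pair (X, X') on some probability space, with X' distributed as X, such that P(X − X' = 1) = P(X − X' = −1) = (1/2)·(1 − d_TV(L(X), L(X+1))). -/
open MeasureTheory ProbabilityTheory Real
open scoped NNReal ENNReal

/-!
On a countable space the total variation distance of two probability laws with masses `a k`,
`b k` is `1 - ∑ min (a k) (b k)`, the supremum being attained at `{k | b k < a k}`. For the law
`μ` of `X` and its shift by one, the overlap is `s = ∑ min (μ{k}, μ{k+1})`. Mineka's coupling puts
mass `min (μ{k}, μ{k+1}) / 2` on each of `(k, k+1)` and `(k+1, k)` and the remaining mass of `k` on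
the diagonal point `(k, k)`. It is swap-invariant by construction, its first marginal collects
exactly `μ{k}` at `k`, and `X - X' = 1` happens precisely on the off-diagonal points `(k+1, k)`,
of total mass `s / 2 = (1 - d_TV) / 2`.
-/

section Discrete

variable {α : Type*} [MeasurableSpace α] [Countable α] [MeasurableSingletonClass α]

lemma measureReal_eq_tsum_indicator (μ : Measure α) [IsFiniteMeasure μ] (A : Set α) :
    μ.real A = ∑' k, A.indicator (fun k => μ.real {k}) k := by
  rw [measureReal_def, ← μ.tsum_indicator_apply_singleton A .of_discrete,
    ENNReal.tsum_toReal_eq (f := fun k => A.indicator (fun k => μ {k}) k)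
      fun k => ((Set.indicator_le_self _ _ k).trans_lt (measure_lt_top μ _)).ne]
  exact tsum_congr fun k => by by_cases hk : k ∈ A <;> simp [hk, measureReal_def]

lemma summable_measureReal_singleton (μ : Measure α) [IsFiniteMeasure μ] :
    Summable fun k => μ.real {k} := by
  refine ENNReal.summable_toReal (ne_of_eq_of_ne ?_ (measure_ne_top μ Set.univ))
  simpa using μ.tsum_indicator_apply_singleton Set.univ .univ

lemma tsum_measureReal_singleton (μ : Measure α) [IsProbabilityMeasure μ] :
    ∑' k, μ.real {k} = 1 := by
  simpa using (measureReal_eq_tsum_indicator μ Set.univ).symm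

lemma summable_min_measureReal_singleton (μ ν : Measure α) [IsFiniteMeasure μ] :
    Summable fun k => min (μ.real {k}) (ν.real {k}) :=
  (summable_measureReal_singleton μ).of_nonneg_of_le (fun _ => le_min measureReal_nonneg
    measureReal_nonneg) fun _ => min_le_left _ _

lemma measureReal_sub_measureReal_eq_tsum (μ ν : Measure α) [IsFiniteMeasure μ]
    [IsFiniteMeasure ν] (A : Set α) :
    μ.real A - ν.real A = ∑' k, A.indicator (fun k => μ.real {k} - ν.real {k}) k := by
  rw [measureReal_eq_tsum_indicator μ, measureReal_eq_tsum_indicator ν,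
    ← ((summable_measureReal_singleton μ).indicator A).tsum_sub
      ((summable_measureReal_singleton ν).indicator A)]
  exact tsum_congr fun k => (congrFun (Set.indicator_sub A _ _) k).symm

lemma tsum_measureReal_sub_min (μ ν : Measure α) [IsProbabilityMeasure μ] :
    ∑' k, (μ.real {k} - min (μ.real {k}) (ν.real {k}))
      = 1 - ∑' k, min (μ.real {k}) (ν.real {k}) := by
  rw [(summable_measureReal_singleton μ).tsum_sub (summable_min_measureReal_singleton μ ν),
    tsum_measureReal_singleton]

lemma measureReal_sub_measureReal_le (μ ν : Measure α) [IsProbabilityMeasure μ]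
    [IsFiniteMeasure ν] (A : Set α) :
    μ.real A - ν.real A ≤ 1 - ∑' k, min (μ.real {k}) (ν.real {k}) := by
  rw [measureReal_sub_measureReal_eq_tsum, ← tsum_measureReal_sub_min]
  refine ((summable_measureReal_singleton μ).sub
    (summable_measureReal_singleton ν)).indicator A |>.tsum_le_tsum (fun k => ?_)
    ((summable_measureReal_singleton μ).sub (summable_min_measureReal_singleton μ ν))
  by_cases hk : k ∈ A
  · simpa [hk] using sub_le_sub_left (min_le_right (μ.real {k}) (ν.real {k})) (μ.real {k})
  · simp [hk]

lemma measureReal_sub_measureReal_eq_of_lt (μ ν : Measure α) [IsProbabilityMeasure μ]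
    [IsFiniteMeasure ν] :
    μ.real {k | ν.real {k} < μ.real {k}} - ν.real {k | ν.real {k} < μ.real {k}}
      = 1 - ∑' k, min (μ.real {k}) (ν.real {k}) := by
  rw [measureReal_sub_measureReal_eq_tsum, ← tsum_measureReal_sub_min]
  refine tsum_congr fun k => ?_
  by_cases hk : ν.real {k} < μ.real {k}
  · simp [hk, min_eq_right hk.le]
  · simp [hk, min_eq_left (not_lt.1 hk)]

theorem tvDist_eq_one_sub_tsum_min (μ ν : Measure α) [IsProbabilityMeasure μ]
    [IsProbabilityMeasure ν] :
    tvDist μ ν = 1 - ∑' k, min (μ.real {k}) (ν.real {k}) := by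
  have hle (A : Set α) : |μ.real A - ν.real A| ≤ 1 - ∑' k, min (μ.real {k}) (ν.real {k}) := by
    refine abs_sub_le_iff.2 ⟨measureReal_sub_measureReal_le μ ν A, ?_⟩
    simpa only [min_comm] using measureReal_sub_measureReal_le ν μ A
  refine le_antisymm (ciSup_le fun A => hle A) ?_
  refine le_ciSup_of_le ⟨_, Set.forall_mem_range.2 fun A => hle A⟩
    ⟨{k | ν.real {k} < μ.real {k}}, .of_discrete⟩ ?_
  exact (measureReal_sub_measureReal_eq_of_lt μ ν).symm.le.trans (le_abs_self _)

end Discrete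

lemma tvDist_map_add_one (μ : Measure ℤ) [IsProbabilityMeasure μ] :
    tvDist μ (μ.map (· + 1)) = 1 - ∑' k, min (μ.real {k}) (μ.real {k + 1}) := by
  have hshift (k : ℤ) : (μ.map (· + 1)).real {k} = μ.real {k - 1} := by
    rw [map_measureReal_apply (measurable_of_countable _) (.singleton k)]
    congr 1
    ext j
    simp only [Set.mem_preimage, Set.mem_singleton_iff, eq_sub_iff_add_eq]
  have : IsProbabilityMeasure (μ.map (· + 1)) :=
    Measure.isProbabilityMeasure_map (measurable_of_countable _).aemeasurable
  rw [tvDist_eq_one_sub_tsum_min, ← (Equiv.addRight (1 : ℤ)).tsum_eq]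
  simp only [hshift, Equiv.coe_addRight, add_sub_cancel_right, min_comm]

namespace Mineka

variable (μ : Measure ℤ)

noncomputable def overlap (k : ℤ) : ℝ≥0∞ := min (μ {k}) (μ {k + 1})

noncomputable def residual (k : ℤ) : ℝ≥0∞ := μ {k} - (overlap μ (k - 1) / 2 + overlap μ k / 2)

noncomputable def coupling : Measure (ℤ × ℤ) :=
  Measure.sum (fun k => (overlap μ k / 2) • (Measure.dirac (k, k + 1) + Measure.dirac (k + 1, k)))
    + Measure.sum fun k => residual μ k • Measure.dirac (k, k)

lemma residual_add_overlap (k : ℤ) :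
    residual μ k + (overlap μ (k - 1) / 2 + overlap μ k / 2) = μ {k} := by
  refine tsub_add_cancel_of_le ?_
  calc overlap μ (k - 1) / 2 + overlap μ k / 2 ≤ μ {k} / 2 + μ {k} / 2 := by
        gcongr
        · exact (min_le_right _ _).trans_eq (by rw [sub_add_cancel])
        · exact min_le_left _ _
    _ = μ {k} := ENNReal.add_halves _

lemma coupling_map_swap : (coupling μ).map Prod.swap = coupling μ := by
  simp [coupling, Measure.map_add _ _ measurable_swap,
    Measure.map_sum measurable_swap.aemeasurable, add_comm]

lemma coupling_map_fst : (coupling μ).map Prod.fst = μ := by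
  classical
  refine Measure.ext_iff_singleton.2 fun i => ?_
  rw [Measure.map_apply measurable_fst (.singleton i)]
  simp only [coupling, smul_add, Measure.coe_add, Pi.add_apply, Measure.sum_apply _ .of_discrete,
    Measure.coe_smul, Pi.smul_apply, Measure.dirac_apply, Set.indicator_apply, Set.mem_preimage,
    Set.mem_singleton_iff, Pi.one_apply, smul_eq_mul, mul_ite, mul_one, mul_zero,
    ← eq_sub_iff_add_eq, ENNReal.tsum_add, tsum_ite_eq]
  rw [← residual_add_overlap μ i]
  ring

lemma coupling_map_snd : (coupling μ).map Prod.snd = μ := by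
  rw [← coupling_map_swap, Measure.map_map measurable_snd measurable_swap]
  exact coupling_map_fst μ

lemma coupling_sub_eq_one :
    coupling μ {x | x.1 - x.2 = 1} = (∑' k, overlap μ k) / 2 := by
  simp [coupling, Measure.sum_apply _ .of_discrete, div_eq_mul_inv, ENNReal.tsum_mul_right]

lemma coupling_sub_eq_neg_one :
    coupling μ {x | x.1 - x.2 = -1} = coupling μ {x | x.1 - x.2 = 1} := by
  conv_rhs => rw [← coupling_map_swap, Measure.map_apply measurable_swap .of_discrete]
  congr 1
  ext x
  simp only [Set.mem_ofPred_eq, Set.mem_preimage, Prod.fst_swap, Prod.snd_swap]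
  omega

lemma coupling_real_sub_eq_one [IsFiniteMeasure μ] :
    (coupling μ).real {x | x.1 - x.2 = 1} = (∑' k, min (μ.real {k}) (μ.real {k + 1})) / 2 := by
  rw [measureReal_def, coupling_sub_eq_one, ENNReal.toReal_div,
    ENNReal.tsum_toReal_eq (f := overlap μ)
      fun k => (min_le_left _ _).trans_lt (measure_lt_top μ {k}) |>.ne]
  simp only [overlap, ENNReal.toReal_min (measure_ne_top μ _) (measure_ne_top μ _), measureReal_def,
    ENNReal.toReal_ofNat]

instance isProbabilityMeasure_coupling [IsProbabilityMeasure μ] :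
    IsProbabilityMeasure (coupling μ) := by
  constructor
  rw [← Set.preimage_univ (f := Prod.fst), ← Measure.map_apply measurable_fst .univ,
    coupling_map_fst, measure_univ]

end Mineka

/-- Mineka coupling: for any integer valued random variable `X` there
is an exchangeable pair `(Y, Y')`, with both coordinates distributed as `X`, such that
`P(Y - Y' = 1) = P(Y - Y' = -1) = (1/2)(1 - d_TV(L(X), L(X+1)))`. -/
theorem stmt14 {Ω : Type} [MeasurableSpace Ω] (P : Measure Ω) [IsProbabilityMeasure P]
    (X : Ω → ℤ) (hX : Measurable X) :
    ∃ (Ω' : Type) (mΩ' : MeasurableSpace Ω') (Q : Measure Ω') (Y Y' : Ω' → ℤ),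
      IsProbabilityMeasure Q ∧ Measurable Y ∧ Measurable Y' ∧
      Q.map Y = P.map X ∧ Q.map Y' = P.map X ∧
      Q.map (fun ω => (Y ω, Y' ω)) = Q.map (fun ω => (Y' ω, Y ω)) ∧
      (Q {ω | Y ω - Y' ω = 1}).toReal
        = 1 / 2 * (1 - tvDist (P.map X) (P.map fun ω => X ω + 1)) ∧
      (Q {ω | Y ω - Y' ω = -1}).toReal
        = 1 / 2 * (1 - tvDist (P.map X) (P.map fun ω => X ω + 1)) := by
  set μ := P.map X
  have : IsProbabilityMeasure μ := Measure.isProbabilityMeasure_map hX.aemeasurable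
  have hshift : P.map (fun ω => X ω + 1) = μ.map (· + 1) :=
    (Measure.map_map (measurable_of_countable (· + 1 : ℤ → ℤ)) hX).symm
  have hdiff : (Mineka.coupling μ).real {x | x.1 - x.2 = 1}
      = 1 / 2 * (1 - tvDist μ (μ.map (· + 1))) := by
    rw [Mineka.coupling_real_sub_eq_one, tvDist_map_add_one]
    ring
  refine ⟨ℤ × ℤ, inferInstance, Mineka.coupling μ, Prod.fst, Prod.snd, inferInstance,
    measurable_fst, measurable_snd, Mineka.coupling_map_fst μ, Mineka.coupling_map_snd μ,
    ?_, ?_, ?_⟩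
  · exact Measure.map_id.trans (Mineka.coupling_map_swap μ).symm
  · rw [hshift]
    exact hdiff
  · rw [hshift, ← hdiff, Mineka.coupling_sub_eq_neg_one]
    rfl
end

section
/- Let X₁, …, Xₙ be square-integrable random variables with E Xᵢ = μᵢ, and suppose for each i ∈ {1,…,n} there are sets Aᵢ, Bᵢ ⊆ {1,…,n} such that Xᵢ is independent of {Xⱼ : j ∉ Aᵢ} and {Xⱼ : j ∈ Aᵢ} is independent of {Xⱼ : j ∉ Bᵢ}. Assume |N(Bᵢ)| ≤ θ for every i, where N(Bᵢ) = {j ∈ {1,…,n} : Aⱼ ∩ Bᵢ ≠ ∅}. Then Var( Σ_{i=1}^n (Xᵢ − μᵢ)·Σ_{j ∈ Aᵢ}(Xⱼ − μⱼ) ) ≤ θ·Σ_{i=1}^n E[ ((Xᵢ − μᵢ)·Σ_{j ∈ Aᵢ}(Xⱼ − μⱼ))² ]. -/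
open MeasureTheory ProbabilityTheory Real
open scoped NNReal ENNReal

/-! Write `Yᵢ = (Xᵢ - μᵢ) * ∑_{j ∈ Aᵢ} (Xⱼ - μⱼ)`. Each `Yᵢ` is almost surely a measurable function
of `(Xⱼ)_{j ∈ Aᵢ}`: if `i ∉ Aᵢ`, then `Xᵢ` is independent of itself, hence almost surely constant.
So when `Aⱼ ∩ Bᵢ = ∅`, `Yⱼ` is a function of `(Xₖ)_{k ∉ Bᵢ}` and `Cov(Yᵢ, Yⱼ) = 0`. In the expansion
`Var(∑ Yᵢ) = ∑_{i,j} Cov(Yᵢ, Yⱼ)` the surviving terms are bounded by `2 Cov(Yᵢ, Yⱼ) ≤ Var Yᵢ + Var Yⱼ`,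
which gives `Var(∑ Yᵢ) ≤ ∑ᵢ |N(Bᵢ)| Var Yᵢ ≤ θ ∑ᵢ E Yᵢ²`. -/

namespace ProbabilityTheory

open Finset

variable {Ω : Type*} [MeasurableSpace Ω] {μ : Measure Ω}

theorem two_mul_covariance_le_variance_add [IsFiniteMeasure μ] {X Y : Ω → ℝ}
    (hX : MemLp X 2 μ) (hY : MemLp Y 2 μ) :
    2 * cov[X, Y; μ] ≤ Var[X; μ] + Var[Y; μ] := by
  linarith [variance_sub hX hY, variance_nonneg (X - Y) μ]

theorem variance_fun_sum_le_sum_card_mul_variance [IsFiniteMeasure μ] {ι : Type*} [Fintype ι]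
    {Y : ι → Ω → ℝ} (hY : ∀ i, MemLp (Y i) 2 μ) (c : ι → ι → Prop) [DecidableRel c]
    (hc : ∀ i j, ¬ c i j → cov[Y i, Y j; μ] = 0) :
    Var[fun ω => ∑ i, Y i ω; μ] ≤ ∑ i, #{j | c i j} * Var[Y i; μ] := by
  have hbound : ∀ i j, cov[Y i, Y j; μ]
      ≤ ((if c i j then Var[Y i; μ] else 0) + (if c j i then Var[Y j; μ] else 0)) / 2 := by
    intro i j
    by_cases hcij : c i j ∧ c j i
    · simp only [hcij.1, hcij.2, if_true]
      linarith [two_mul_covariance_le_variance_add (hY i) (hY j)]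
    · have hzero : cov[Y i, Y j; μ] = 0 := by
        rcases not_and_or.mp hcij with h | h
        · exact hc i j h
        · rw [covariance_comm, hc j i h]
      rw [hzero]
      split_ifs <;> linarith [variance_nonneg (Y i) μ, variance_nonneg (Y j) μ]
  have hrow : ∀ i, ∑ j, (if c i j then Var[Y i; μ] else 0) = #{j | c i j} * Var[Y i; μ] := by
    intro i
    rw [← sum_filter, sum_const, nsmul_eq_mul]
  calc Var[fun ω => ∑ i, Y i ω; μ] = ∑ i, ∑ j, cov[Y i, Y j; μ] := variance_fun_sum hY
    _ ≤ ∑ i, ∑ j, ((if c i j then Var[Y i; μ] else 0) + (if c j i then Var[Y j; μ] else 0)) / 2 :=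
      sum_le_sum fun i _ => sum_le_sum fun j _ => hbound i j
    _ = ∑ i, ∑ j, (if c i j then Var[Y i; μ] else 0) := by
      simp only [← sum_div, sum_add_distrib]
      rw [sum_comm (f := fun i j => if c j i then Var[Y j; μ] else 0)]
      ring
    _ = ∑ i, #{j | c i j} * Var[Y i; μ] := sum_congr rfl fun i _ => hrow i

theorem IndepFun.ae_eq_integral_of_self [IsFiniteMeasure μ] {X : Ω → ℝ} (h : X ⟂ᵢ[μ] X)
    (hX : MemLp X 2 μ) : X =ᵐ[μ] fun _ => μ[X] :=
  ae_eq_integral_of_variance_eq_zero hX <| by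
    rw [← covariance_self hX.aemeasurable, h.covariance_eq_zero hX hX]

variable {ι : Type*}

def IsAEFunOf (X : ι → Ω → ℝ) (p : ι → Prop) (μ : Measure Ω) (Z : Ω → ℝ) : Prop :=
  ∃ F : ({j // p j} → ℝ) → ℝ, Measurable F ∧ Z =ᵐ[μ] fun ω => F fun j => X j ω

namespace IsAEFunOf

variable {X : ι → Ω → ℝ} {p q : ι → Prop} {Z W : Ω → ℝ}

theorem apply {i : ι} (hi : p i) : IsAEFunOf X p μ (X i) :=
  ⟨fun v => v ⟨i, hi⟩, measurable_pi_apply _, .rfl⟩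

theorem const (c : ℝ) : IsAEFunOf X p μ fun _ => c :=
  ⟨fun _ => c, measurable_const, .rfl⟩

theorem of_ae_eq (hZ : IsAEFunOf X p μ Z) (h : W =ᵐ[μ] Z) : IsAEFunOf X p μ W :=
  let ⟨F, hF, hZF⟩ := hZ
  ⟨F, hF, h.trans hZF⟩

theorem mul (hZ : IsAEFunOf X p μ Z) (hW : IsAEFunOf X p μ W) :
    IsAEFunOf X p μ fun ω => Z ω * W ω := by
  obtain ⟨F, hF, hZF⟩ := hZ
  obtain ⟨G, hG, hWG⟩ := hW
  exact ⟨fun v => F v * G v, hF.mul hG, hZF.mul hWG⟩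

theorem sub_const (hZ : IsAEFunOf X p μ Z) (c : ℝ) : IsAEFunOf X p μ fun ω => Z ω - c := by
  obtain ⟨F, hF, hZF⟩ := hZ
  exact ⟨fun v => F v - c, hF.sub_const c, hZF.sub (.rfl : (fun _ => c) =ᵐ[μ] _)⟩

theorem finset_sum {κ : Type*} (s : Finset κ) {Z : κ → Ω → ℝ}
    (hZ : ∀ k ∈ s, IsAEFunOf X p μ (Z k)) : IsAEFunOf X p μ fun ω => ∑ k ∈ s, Z k ω := by
  choose! F hF hZF using hZ
  refine ⟨fun v => ∑ k ∈ s, F k v, Finset.measurable_sum s hF, ?_⟩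
  filter_upwards [(Filter.eventually_all_finset s).mpr hZF] with ω hω
  exact sum_congr rfl hω

theorem mono (hZ : IsAEFunOf X p μ Z) (hpq : ∀ j, p j → q j) : IsAEFunOf X q μ Z := by
  obtain ⟨F, hF, hZF⟩ := hZ
  exact ⟨fun v => F fun j => v ⟨j, hpq j j.2⟩,
    hF.comp (measurable_pi_lambda _ fun j => measurable_pi_apply _), hZF⟩

theorem indepFun (hZ : IsAEFunOf X p μ Z) (hW : IsAEFunOf X q μ W)
    (h : (fun ω (j : {j // p j}) => X j ω) ⟂ᵢ[μ] fun ω (j : {j // q j}) => X j ω) :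
    Z ⟂ᵢ[μ] W := by
  obtain ⟨F, hF, hZF⟩ := hZ
  obtain ⟨G, hG, hWG⟩ := hW
  exact (h.comp hF hG).congr hZF.symm hWG.symm

end IsAEFunOf

theorem isAEFunOf_of_indepFun_compl [IsFiniteMeasure μ] {X : ι → Ω → ℝ} {p : ι → Prop} {i : ι}
    (h : X i ⟂ᵢ[μ] fun ω (j : {j // ¬ p j}) => X j ω) (hXi : MemLp (X i) 2 μ) :
    IsAEFunOf X p μ (X i) := by
  by_cases hi : p i
  · exact .apply hi
  · exact (IsAEFunOf.const _).of_ae_eq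
      ((h.comp measurable_id (measurable_pi_apply ⟨i, hi⟩)).ae_eq_integral_of_self hXi)

end ProbabilityTheory

theorem stmt16_general {Ω : Type} [MeasurableSpace Ω] (P : Measure Ω) [IsProbabilityMeasure P]
    (n : ℕ) (X : Fin n → Ω → ℝ)
    (hXL2 : ∀ i, MemLp (X i) 2 P)
    (μi : Fin n → ℝ)
    (A B : Fin n → Finset (Fin n))
    (hA : ∀ i, IndepFun (X i) (fun ω (j : {j // j ∉ A i}) => X j ω) P)
    (hB : ∀ i, IndepFun (fun ω (j : {j // j ∈ A i}) => X j ω)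
                        (fun ω (j : {j // j ∉ B i}) => X j ω) P)
    (θ : ℝ)
    (hθ : ∀ i, ((Finset.univ.filter fun j => ((A j) ∩ (B i)).Nonempty).card : ℝ) ≤ θ)
    (hmom : ∀ i, MemLp (fun ω => (X i ω - μi i) * ∑ j ∈ A i, (X j ω - μi j)) 2 P) :
    variance (fun ω => ∑ i, (X i ω - μi i) * ∑ j ∈ A i, (X j ω - μi j)) P
      ≤ θ * ∑ i, ∫ ω, ((X i ω - μi i) * ∑ j ∈ A i, (X j ω - μi j)) ^ 2 ∂P := by
  have hloc : ∀ i, IsAEFunOf X (· ∈ A i) P fun ω => (X i ω - μi i) * ∑ j ∈ A i, (X j ω - μi j) :=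
    fun i => ((isAEFunOf_of_indepFun_compl (hA i) (hXL2 i)).sub_const _).mul
      (.finset_sum _ fun j hj => (IsAEFunOf.apply hj).sub_const _)
  have hcov : ∀ i j, ¬ (A j ∩ B i).Nonempty →
      cov[fun ω => (X i ω - μi i) * ∑ k ∈ A i, (X k ω - μi k),
        fun ω => (X j ω - μi j) * ∑ k ∈ A j, (X k ω - μi k); P] = 0 := fun i j hij =>
    ((hloc i).indepFun ((hloc j).mono fun k hk hkB => hij ⟨k, Finset.mem_inter.mpr ⟨hk, hkB⟩⟩)
      (hB i)).covariance_eq_zero (hmom i) (hmom j)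
  calc _ ≤ ∑ i, ((Finset.univ.filter fun j => ((A j) ∩ (B i)).Nonempty).card : ℝ)
          * Var[fun ω => (X i ω - μi i) * ∑ j ∈ A i, (X j ω - μi j); P] :=
        variance_fun_sum_le_sum_card_mul_variance hmom (fun i j => (A j ∩ B i).Nonempty) hcov
    _ ≤ ∑ i, θ * ∫ ω, ((X i ω - μi i) * ∑ j ∈ A i, (X j ω - μi j)) ^ 2 ∂P :=
        Finset.sum_le_sum fun i _ => mul_le_mul (hθ i)
          (variance_le_expectation_sq (hmom i).aestronglyMeasurable) (variance_nonneg _ _)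
          ((Nat.cast_nonneg _).trans (hθ i))
    _ = _ := (Finset.mul_sum _ _ _).symm

/-- variance bound under local dependence. -/
theorem stmt16 {Ω : Type} [MeasurableSpace Ω] (P : Measure Ω) [IsProbabilityMeasure P]
    (n : ℕ) (X : Fin n → Ω → ℝ) (hX : ∀ i, Measurable (X i))
    (hXL2 : ∀ i, MemLp (X i) 2 P)
    (μi : Fin n → ℝ) (hμi : ∀ i, ∫ ω, X i ω ∂P = μi i)
    (A B : Fin n → Finset (Fin n))
    (hA : ∀ i, IndepFun (X i) (fun ω (j : {j // j ∉ A i}) => X j ω) P)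
    (hB : ∀ i, IndepFun (fun ω (j : {j // j ∈ A i}) => X j ω)
                        (fun ω (j : {j // j ∉ B i}) => X j ω) P)
    (θ : ℝ)
    (hθ : ∀ i, ((Finset.univ.filter fun j => ((A j) ∩ (B i)).Nonempty).card : ℝ) ≤ θ)
    (hmom : ∀ i, MemLp (fun ω => (X i ω - μi i) * ∑ j ∈ A i, (X j ω - μi j)) 2 P) :
    variance (fun ω => ∑ i, (X i ω - μi i) * ∑ j ∈ A i, (X j ω - μi j)) P
      ≤ θ * ∑ i, ∫ ω, ((X i ω - μi i) * ∑ j ∈ A i, (X j ω - μi j)) ^ 2 ∂P :=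
  stmt16_general P n X hXL2 μi A B hA hB θ hθ hmom
end

section
/- Let X₁, …, Xₙ be integrable random variables with E Xᵢ = μᵢ and S = Σ_{i=1}^n Xᵢ, μ = Σ μᵢ. Suppose for each i there is a set Aᵢ ⊆ {1,…,n} with i ∈ Aᵢ such that Xᵢ is independent of {Xⱼ : j ∉ Aᵢ}. Let I be uniformly distributed on {1,…,n} and independent of (X₁,…,Xₙ), and set S' = S − Σ_{j ∈ A_I}(Xⱼ − μⱼ) and G = −n(X_I − μ_I). Then (S, S', G) is a Stein coupling: E[G f(S') − G f(S)] = E[(S − μ) f(S)] for every bounded measurable f: ℝ → ℝ. -/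
open MeasureTheory ProbabilityTheory Real
open scoped NNReal ENNReal

/-!
Since `I` is uniform and independent of `X`, averaging over `I = i` turns
`E[G (f S' - f S)]` into `-∑ᵢ E[(Xᵢ - μᵢ) (f (S - ∑_{j ∈ Aᵢ} (Xⱼ - μⱼ)) - f S)]`.
The argument `S - ∑_{j ∈ Aᵢ} (Xⱼ - μⱼ)` is a function of `(Xⱼ)_{j ∉ Aᵢ}` alone, which is
independent of `Xᵢ`, so the first half of each term vanishes, and what is left,
`∑ᵢ E[(Xᵢ - μᵢ) f S]`, is `E[(S - μ) f S]`.
-/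

lemma Finset.sum_sub_sum_sub_eq_sum_subtype_add {ι M : Type*} [Fintype ι] [DecidableEq ι]
    [AddCommGroup M] (A : Finset ι) (x m : ι → M) :
    ∑ j, x j - ∑ j ∈ A, (x j - m j) = ∑ j : {j // j ∉ A}, x j + ∑ j ∈ A, m j := by
  rw [← Finset.sum_subtype Aᶜ (fun _ => Finset.mem_compl), Finset.sum_sub_distrib,
    ← Finset.sum_add_sum_compl A x]
  abel

section

variable {Ω : Type*} [MeasurableSpace Ω] {P : Measure Ω}

lemma integral_comp_indepFun_index {ι β : Type*} [Fintype ι] [MeasurableSpace ι]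
    [MeasurableSingletonClass ι] [MeasurableSpace β] {I : Ω → ι} {Y : Ω → β}
    (hI : Measurable I) (hY : Measurable Y) (hIY : IndepFun I Y P) {g : ι → β → ℝ}
    (hg : ∀ i, Measurable (g i)) (hint : ∀ i, Integrable (fun ω => g i (Y ω)) P) :
    ∫ ω, g (I ω) (Y ω) ∂P = ∑ i, P.real (I ⁻¹' {i}) * ∫ ω, g i (Y ω) ∂P := by
  have hindicator : ∀ i, Measurable (({i} : Set ι).indicator (1 : ι → ℝ)) := fun i =>
    measurable_one.indicator (measurableSet_singleton i)
  have hsplit : ∀ ω, g (I ω) (Y ω) = ∑ i, ({i} : Set ι).indicator 1 (I ω) * g i (Y ω) := by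
    intro ω
    rw [Finset.sum_eq_single (I ω) (fun i _ hi => by simp [Ne.symm hi]) (by simp)]
    simp
  have hterm : ∀ i, Integrable (fun ω => ({i} : Set ι).indicator 1 (I ω) * g i (Y ω)) P :=
    fun i => (hint i).bdd_mul (c := 1) ((hindicator i).comp hI).aestronglyMeasurable
      (ae_of_all _ fun ω => by by_cases h : I ω = i <;> simp [h])
  simp_rw [hsplit]
  rw [integral_finsetSum _ fun i _ => hterm i]
  refine Finset.sum_congr rfl fun i _ => ?_
  rw [hIY.integral_fun_comp_mul_comp hI.aemeasurable hY.aemeasurable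
    (hindicator i).aestronglyMeasurable (hg i).aestronglyMeasurable]
  congr 1
  rw [← integral_indicator_one (hI (measurableSet_singleton i))]
  rfl

lemma integral_centered_mul_eq_zero_of_indepFun_compl [IsProbabilityMeasure P] {ι : Type*}
    [Fintype ι] [DecidableEq ι] {X : ι → Ω → ℝ} (hX : ∀ i, Measurable (X i)) {m : ι → ℝ}
    {i : ι} (hXi : Integrable (X i) P) (hm : ∫ ω, X i ω ∂P = m i) {A : Finset ι}
    (hA : IndepFun (X i) (fun ω (j : {j // j ∉ A}) => X j ω) P) {f : ℝ → ℝ} (hf : Measurable f) :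
    ∫ ω, (X i ω - m i) * f (∑ j, X j ω - ∑ j ∈ A, (X j ω - m j)) ∂P = 0 := by
  simp_rw [Finset.sum_sub_sum_sub_eq_sum_subtype_add]
  rw [hA.integral_fun_comp_mul_comp (f := fun x => x - m i)
    (g := fun v : {j // j ∉ A} → ℝ => f (∑ j, v j + ∑ j ∈ A, m j)) (hX i).aemeasurable
    (measurable_pi_lambda _ fun j : {j // j ∉ A} => hX j).aemeasurable
    (by fun_prop) (Measurable.aestronglyMeasurable (by fun_prop)),
    integral_sub hXi (integrable_const _), hm]
  simp

end

theorem stmt17_general {Ω : Type} [MeasurableSpace Ω] (P : Measure Ω) [IsProbabilityMeasure P]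
    (n : ℕ) (hn : 0 < n)
    (X : Fin n → Ω → ℝ) (hX : ∀ i, Measurable (X i)) (hXint : ∀ i, Integrable (X i) P)
    (μi : Fin n → ℝ) (hμi : ∀ i, ∫ ω, X i ω ∂P = μi i)
    (A : Fin n → Finset (Fin n))
    (hA : ∀ i, IndepFun (X i) (fun ω (j : {j // j ∉ A i}) => X j ω) P)
    (I : Ω → Fin n) (hI : Measurable I)
    (hIunif : ∀ i, P {ω | I ω = i} = ((n : ℝ≥0∞))⁻¹)
    (hIindep : IndepFun I (fun ω (j : Fin n) => X j ω) P)
    (μ : ℝ) (hμ : μ = ∑ i, μi i)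
    (S S' G : Ω → ℝ)
    (hS : S = fun ω => ∑ i, X i ω)
    (hS' : S' = fun ω => S ω - ∑ j ∈ A (I ω), (X j ω - μi j))
    (hG : G = fun ω => -(n : ℝ) * (X (I ω) ω - μi (I ω))) :
    ∀ f : ℝ → ℝ, Measurable f → (∃ C, ∀ x, |f x| ≤ C) →
      ∫ ω, G ω * (f (S' ω) - f (S ω)) ∂P = ∫ ω, (S ω - μ) * f (S ω) ∂P := by
  rintro f hf ⟨C, hC⟩
  subst hS hS' hG hμ
  set Y : Ω → Fin n → ℝ := fun ω j => X j ω
  set H : Fin n → (Fin n → ℝ) → ℝ := fun i x =>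
    (x i - μi i) * (f (∑ j, x j - ∑ j ∈ A i, (x j - μi j)) - f (∑ j, x j))
  have hY : Measurable Y := measurable_pi_lambda _ hX
  have hterm_int {Z : Ω → ℝ} (hZ : Measurable Z) (i : Fin n) :
      Integrable (fun ω => (X i ω - μi i) * f (Z ω)) P :=
    ((hXint i).sub (integrable_const _)).mul_bdd (hf.comp hZ).aestronglyMeasurable
      (ae_of_all _ fun ω => hC (Z ω))
  have hH_int (i : Fin n) : Integrable (fun ω => H i (Y ω)) P := by
    simp only [H, Y, mul_sub]
    exact (hterm_int (by fun_prop) i).sub (hterm_int (by fun_prop) i)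
  have hH (i : Fin n) : ∫ ω, H i (Y ω) ∂P = -∫ ω, (X i ω - μi i) * f (∑ j, X j ω) ∂P := by
    simp only [H, Y, mul_sub]
    rw [integral_sub (hterm_int (by fun_prop) i) (hterm_int (by fun_prop) i),
      integral_centered_mul_eq_zero_of_indepFun_compl hX (hXint i) (hμi i) (hA i) hf, zero_sub]
  have hPI (i : Fin n) : P.real (I ⁻¹' {i}) = (n : ℝ)⁻¹ := by
    change (P {ω | I ω = i}).toReal = _
    simp [hIunif]
  beta_reduce
  calc _ = -(n : ℝ) * ∫ ω, H (I ω) (Y ω) ∂P := by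
        rw [← integral_const_mul]
        simp only [H, Y, mul_assoc]
    _ = ∑ i, ∫ ω, (X i ω - μi i) * f (∑ j, X j ω) ∂P := by
        rw [integral_comp_indepFun_index hI hY hIindep (fun i => by fun_prop) hH_int,
          Finset.mul_sum]
        refine Finset.sum_congr rfl fun i _ => ?_
        rw [hPI, hH]
        field_simp
    _ = _ := by
        rw [← integral_finsetSum _ fun i _ => hterm_int (by fun_prop) i]
        simp only [← Finset.sum_mul, Finset.sum_sub_distrib]

/-- the local-dependence construction
`(S, S - Σ_{j ∈ A_I}(X_j - μ_j), -n(X_I - μ_I))` is a Stein coupling. -/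
theorem stmt17 {Ω : Type} [MeasurableSpace Ω] (P : Measure Ω) [IsProbabilityMeasure P]
    (n : ℕ) (hn : 0 < n)
    (X : Fin n → Ω → ℝ) (hX : ∀ i, Measurable (X i)) (hXint : ∀ i, Integrable (X i) P)
    (μi : Fin n → ℝ) (hμi : ∀ i, ∫ ω, X i ω ∂P = μi i)
    (A : Fin n → Finset (Fin n)) (hAi : ∀ i, i ∈ A i)
    (hA : ∀ i, IndepFun (X i) (fun ω (j : {j // j ∉ A i}) => X j ω) P)
    (I : Ω → Fin n) (hI : Measurable I)
    (hIunif : ∀ i, P {ω | I ω = i} = ((n : ℝ≥0∞))⁻¹)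
    (hIindep : IndepFun I (fun ω (j : Fin n) => X j ω) P)
    (μ : ℝ) (hμ : μ = ∑ i, μi i)
    (S S' G : Ω → ℝ)
    (hS : S = fun ω => ∑ i, X i ω)
    (hS' : S' = fun ω => S ω - ∑ j ∈ A (I ω), (X j ω - μi j))
    (hG : G = fun ω => -(n : ℝ) * (X (I ω) ω - μi (I ω))) :
    ∀ f : ℝ → ℝ, Measurable f → (∃ C, ∀ x, |f x| ≤ C) →
      ∫ ω, G ω * (f (S' ω) - f (S ω)) ∂P = ∫ ω, (S ω - μ) * f (S ω) ∂P :=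
  stmt17_general P n hn X hX hXint μi hμi A hA I hI hIunif hIindep μ hμ S S' G hS hS' hG
end
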